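/- arXiv:1109.1396 — 5 statements merged into one kernel-verified Lean document; each statement's English description precedes it below -/
import Mathlib

section
/- Let E be a real inner product space, let λ > 0 be a real number, let t ≥ 1 be a natural number, and let w_t, x_t ∈ E and y_t ∈ ℝ with y_t = 1 or y_t = −1. Assume the sample is badly classified: y_t·⟪w_t, x_t⟫ < 1. Define w_{t+1} = (1 − 1/t)·w_t + (1/(λt))·(y_t·x_t). Then ‖w_{t+1}‖² ≤ ‖w_t‖² + 2/(λt) + ‖x_t‖²/(λ²t²). -/
open RealInnerProductSpace

/- Expanding the square, ‖a • w + b • v‖² = a²‖w‖² + 2ab⟪w, v⟫ + b²‖v‖². With a ∈ [0, 1] the first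
term is at most ‖w‖², and since ⟪w, v⟫ < 1 the cross term is at most 2b. For the Pegasos step,
a = 1 - 1/t, b = 1/(λt) and v = y • x, where ‖v‖ = ‖x‖ because y = ±1. -/

lemma mul_le_one_of_mem_Icc_of_lt_one {a m : ℝ} (ha₀ : 0 ≤ a) (ha₁ : a ≤ 1) (hm : m < 1) :
    a * m ≤ 1 := by
  rcases le_or_gt 0 m with hm₀ | hm₀
  · nlinarith
  · nlinarith

lemma norm_smul_add_smul_sq_le {E : Type*} [NormedAddCommGroup E] [InnerProductSpace ℝ E]
    {a b : ℝ} (ha₀ : 0 ≤ a) (ha₁ : a ≤ 1) (hb : 0 ≤ b) {w v : E} (hwv : ⟪w, v⟫ < 1) :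
    ‖a • w + b • v‖ ^ 2 ≤ ‖w‖ ^ 2 + 2 * b + b ^ 2 * ‖v‖ ^ 2 := by
  have hsq : a ^ 2 ≤ 1 := pow_le_one₀ ha₀ ha₁
  have hcross : b * (a * ⟪w, v⟫) ≤ b := mul_le_of_le_one_right hb
    (mul_le_one_of_mem_Icc_of_lt_one ha₀ ha₁ hwv)
  calc ‖a • w + b • v‖ ^ 2 = a ^ 2 * ‖w‖ ^ 2 + 2 * (b * (a * ⟪w, v⟫)) + b ^ 2 * ‖v‖ ^ 2 := by
        rw [norm_add_sq_real, norm_smul, norm_smul, real_inner_smul_left, real_inner_smul_right,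
          Real.norm_eq_abs, Real.norm_eq_abs, mul_pow, mul_pow, sq_abs, sq_abs]
        ring
    _ ≤ 1 * ‖w‖ ^ 2 + 2 * b + b ^ 2 * ‖v‖ ^ 2 := by gcongr
    _ = ‖w‖ ^ 2 + 2 * b + b ^ 2 * ‖v‖ ^ 2 := by rw [one_mul]

lemma one_sub_inv_natCast_nonneg (t : ℕ) : (0 : ℝ) ≤ 1 - 1 / (t : ℝ) := by
  rw [one_div, sub_nonneg]
  exact Nat.cast_inv_le_one t

theorem p2pegasos_upper_step_general {E : Type*} [NormedAddCommGroup E] [InnerProductSpace ℝ E]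
    (lam : ℝ) (hlam : 0 < lam) (t : ℕ)
    (wt xt : E) (yt : ℝ) (hy : yt = 1 ∨ yt = -1)
    (hbad : yt * ⟪wt, xt⟫ < 1) :
    ‖(1 - 1/(t : ℝ)) • wt + (1/(lam * t)) • (yt • xt)‖^2 ≤
      ‖wt‖^2 + 2/(lam * t) + ‖xt‖^2/(lam^2 * t^2) := by
  have hyx : ‖yt • xt‖ = ‖xt‖ := by
    rcases hy with rfl | rfl <;> simp
  have hstep := norm_smul_add_smul_sq_le (one_sub_inv_natCast_nonneg t)
    (sub_le_self 1 (by positivity)) (by positivity : 0 ≤ 1 / (lam * t))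
    (show ⟪wt, yt • xt⟫ < 1 by rwa [real_inner_smul_right])
  rw [hyx] at hstep
  convert hstep using 2 <;> ring

theorem p2pegasos_upper_step {E : Type*} [NormedAddCommGroup E] [InnerProductSpace ℝ E]
    (lam : ℝ) (hlam : 0 < lam) (t : ℕ) (ht : 1 ≤ t)
    (wt xt : E) (yt : ℝ) (hy : yt = 1 ∨ yt = -1)
    (hbad : yt * ⟪wt, xt⟫ < 1) :
    ‖(1 - 1/(t : ℝ)) • wt + (1/(lam * t)) • (yt • xt)‖^2 ≤
      ‖wt‖^2 + 2/(lam * t) + ‖xt‖^2/(lam^2 * t^2) :=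
  p2pegasos_upper_step_general lam hlam t wt xt yt hy hbad
end

section
/- Let λ and X be real numbers with 0 < λ < 1 and X ≥ 0, let t ≥ 1 be a natural number, and let M : ℕ → ℝ be a sequence with M(1) = 0 such that for every natural number s with 1 ≤ s ≤ t, M(s+1) − M(s) ≤ 2/(λs) + X/(λ²s²). Then M(t+1) ≤ (2·(logb 2 t + 1) + 2·X)/λ², where logb 2 denotes the base-2 logarithm. -/
open Finset Real

theorem sub_le_sum_Icc_of_sub_le {M f : ℕ → ℝ} {m n : ℕ} (hmn : m ≤ n + 1)
    (hstep : ∀ s ∈ Icc m n, M (s + 1) - M s ≤ f s) :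
    M (n + 1) - M m ≤ ∑ s ∈ Icc m n, f s := by
  rw [← Ico_add_one_right_eq_Icc, ← sum_Ico_sub M hmn, Ico_add_one_right_eq_Icc]
  exact sum_le_sum hstep

theorem sum_Icc_inv_le_one_add_log (n : ℕ) : ∑ s ∈ Icc 1 n, (s : ℝ)⁻¹ ≤ 1 + log n := by
  simpa [harmonic_eq_sum_Icc] using harmonic_le_one_add_log n

theorem sum_Icc_inv_sq_le_two (n : ℕ) : ∑ s ∈ Icc 1 n, ((s : ℝ) ^ 2)⁻¹ ≤ 2 := by
  have hIcc : Icc 1 n = Ioo 0 (n + 1) := by ext; simp; omega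
  simpa [hIcc] using sum_Ioo_inv_sq_le (α := ℝ) 0 (n + 1)

theorem log_le_logb_of_log_le_one {b x : ℝ} (hb : 1 < b) (hb' : log b ≤ 1) (hx : 0 ≤ log x) :
    log x ≤ logb b x := by
  rw [logb, le_div_iff₀ (log_pos hb)]
  exact mul_le_of_le_one_right hx hb'

theorem summed_upper_bound_general (lam X : ℝ) (hlam0 : 0 < lam) (hlam1 : lam < 1) (hX : 0 ≤ X)
    (t : ℕ) (M : ℕ → ℝ) (hM1 : M 1 = 0)
    (hstep : ∀ s : ℕ, 1 ≤ s → s ≤ t →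
      M (s + 1) - M s ≤ 2/(lam * s) + X/(lam^2 * s^2)) :
    M (t + 1) ≤ (2 * (Real.logb 2 t + 1) + 2 * X)/lam^2 := by
  set H := ∑ s ∈ Icc 1 t, (s : ℝ)⁻¹
  set S := ∑ s ∈ Icc 1 t, ((s : ℝ) ^ 2)⁻¹
  have htelescope : M (t + 1) ≤ 2 / lam * H + X / lam ^ 2 * S := by
    have h := sub_le_sum_Icc_of_sub_le (M := M) (by omega)
      fun s hs ↦ hstep s (mem_Icc.1 hs).1 (mem_Icc.1 hs).2
    rw [hM1, sub_zero] at h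
    convert h using 1
    simp only [H, S, mul_sum, ← sum_add_distrib]
    refine sum_congr rfl fun s _ ↦ ?_
    field_simp
  have hH : H ≤ logb 2 t + 1 := by
    have := log_le_logb_of_log_le_one one_lt_two (log_two_lt_d9.le.trans (by norm_num))
      (log_natCast_nonneg t)
    linarith [sum_Icc_inv_le_one_add_log t]
  have hlam : 2 / lam ≤ 2 / lam ^ 2 :=
    div_le_div_of_nonneg_left zero_le_two (by positivity) (by nlinarith)
  calc M (t + 1) ≤ 2 / lam * H + X / lam ^ 2 * S := htelescope
    _ ≤ 2 / lam ^ 2 * (logb 2 t + 1) + X / lam ^ 2 * 2 := by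
      gcongr
      exact sum_Icc_inv_sq_le_two t
    _ = (2 * (Real.logb 2 t + 1) + 2 * X)/lam^2 := by ring

theorem summed_upper_bound (lam X : ℝ) (hlam0 : 0 < lam) (hlam1 : lam < 1) (hX : 0 ≤ X)
    (t : ℕ) (ht : 1 ≤ t) (M : ℕ → ℝ) (hM1 : M 1 = 0)
    (hstep : ∀ s : ℕ, 1 ≤ s → s ≤ t →
      M (s + 1) - M s ≤ 2/(lam * s) + X/(lam^2 * s^2)) :
    M (t + 1) ≤ (2 * (Real.logb 2 t + 1) + 2 * X)/lam^2 :=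
  summed_upper_bound_general lam X hlam0 hlam1 hX t M hM1 hstep
end

section
/- Let E be a real inner product space, let λ be a real number with 0 < λ < 1, let t be a natural number, let x : ℕ → E and y : ℕ → ℝ with y(s) = 1 or y(s) = −1 for all s, and let X ≥ 0 be a real number with ‖x(s)‖² ≤ X for all 1 ≤ s ≤ t. Let w : ℕ → E satisfy w(1) = 0 and, for all 1 ≤ s ≤ t, w(s+1) = (1 − 1/s)·w(s) + (1/(λs))·(y(s)·x(s)), and assume y(s)·⟪w(s), x(s)⟫ < 1 for all 1 ≤ s ≤ t. If moreover X ≤ logb 2 t and 1 ≤ logb 2 t (equivalently, max(2^X, 2) ≤ t), then ‖w(t+1)‖² ≤ 6·(logb 2 t)/λ², where logb 2 denotes the base-2 logarithm. -/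
open RealInnerProductSpace

/-!
The model stays in the ball of squared radius `(2 + X) / λ²` at every step. Expanding the square of
one update, the contraction `(1 - 1/s)² ≤ 1 - 1/s` frees a slack of `(2 + X) / (λ² s)`, while a
badly classified sample contributes at most `2 / (λ s)` through the cross term and `X / (λ s)²`
through its own norm; both fit into the slack because `λ ≤ 1` and `s ≥ 1`.
-/

section P2Pegasos

variable {E : Type*} [NormedAddCommGroup E] [InnerProductSpace ℝ E]

theorem norm_smul_add_smul_sq_real (a b : ℝ) (w v : E) :
    ‖a • w + b • v‖ ^ 2 = a ^ 2 * ‖w‖ ^ 2 + 2 * (a * b) * ⟪w, v⟫ + b ^ 2 * ‖v‖ ^ 2 := by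
  rw [norm_add_sq_real, real_inner_smul_left, real_inner_smul_right, norm_smul, norm_smul,
    mul_pow, mul_pow, Real.norm_eq_abs, Real.norm_eq_abs, sq_abs, sq_abs]
  ring

theorem norm_sq_pegasos_step_le {lam r X : ℝ} (hlam0 : 0 < lam) (hlam1 : lam ≤ 1) (hr : 1 ≤ r)
    (hX : 0 ≤ X) {w v : E} (hw : ‖w‖ ^ 2 ≤ (2 + X) / lam ^ 2) (hv : ‖v‖ ^ 2 ≤ X)
    (hwv : ⟪w, v⟫ < 1) :
    ‖(1 - 1 / r) • w + (1 / (lam * r)) • v‖ ^ 2 ≤ (2 + X) / lam ^ 2 := by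
  have hr0 : 0 < r := one_pos.trans_le hr
  have hu0 : 0 ≤ 1 - 1 / r := sub_nonneg.mpr ((div_le_one hr0).mpr hr)
  have hu1 : 1 - 1 / r ≤ 1 := sub_le_self _ (by positivity)
  have hc : 0 < 1 / (lam * r) := by positivity
  have contraction : (1 - 1 / r) ^ 2 * ‖w‖ ^ 2 ≤ (1 - 1 / r) * ((2 + X) / lam ^ 2) :=
    calc (1 - 1 / r) ^ 2 * ‖w‖ ^ 2 ≤ (1 - 1 / r) * ‖w‖ ^ 2 := by
          gcongr; nlinarith
      _ ≤ (1 - 1 / r) * ((2 + X) / lam ^ 2) := by gcongr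
  have cross : 2 * ((1 - 1 / r) * (1 / (lam * r))) * ⟪w, v⟫ ≤ 2 / (lam ^ 2 * r) :=
    calc 2 * ((1 - 1 / r) * (1 / (lam * r))) * ⟪w, v⟫
        ≤ 2 * ((1 - 1 / r) * (1 / (lam * r))) * 1 := by gcongr
      _ ≤ 2 * (1 * (1 / (lam * r))) * 1 := by gcongr
      _ ≤ 2 / (lam ^ 2 * r) := by
          rw [one_mul, mul_one, mul_one_div, pow_two, mul_assoc]
          gcongr
          exact mul_le_of_le_one_left (by positivity) hlam1
  have sample : (1 / (lam * r)) ^ 2 * ‖v‖ ^ 2 ≤ X / (lam ^ 2 * r) :=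
    calc (1 / (lam * r)) ^ 2 * ‖v‖ ^ 2 ≤ X / (lam ^ 2 * r ^ 2) := by
          rw [div_pow, mul_pow, one_pow, one_div_mul_eq_div]
          gcongr
      _ ≤ X / (lam ^ 2 * r) := by
          gcongr
          nlinarith
  have slack : (1 - 1 / r) * ((2 + X) / lam ^ 2) + 2 / (lam ^ 2 * r) + X / (lam ^ 2 * r)
      = (2 + X) / lam ^ 2 := by
    field_simp
    ring
  rw [norm_smul_add_smul_sq_real]
  linarith

theorem norm_sq_pegasos_le {lam X : ℝ} (hlam0 : 0 < lam) (hlam1 : lam ≤ 1) (hX : 0 ≤ X)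
    {t : ℕ} {v w : ℕ → E} (hw1 : w 1 = 0)
    (hupdate : ∀ s : ℕ, 1 ≤ s → s ≤ t →
      w (s + 1) = (1 - 1 / (s : ℝ)) • w s + (1 / (lam * s)) • v s)
    (hv : ∀ s, 1 ≤ s → s ≤ t → ‖v s‖ ^ 2 ≤ X) (hbad : ∀ s, 1 ≤ s → s ≤ t → ⟪w s, v s⟫ < 1) :
    ∀ s, 1 ≤ s → s ≤ t + 1 → ‖w s‖ ^ 2 ≤ (2 + X) / lam ^ 2 := by
  intro s hs
  induction s, hs using Nat.le_induction with
  | base => intro; rw [hw1, norm_zero, zero_pow two_ne_zero]; positivity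
  | succ s hs ih =>
    intro hst
    have hst' : s ≤ t := by omega
    rw [hupdate s hs hst']
    exact norm_sq_pegasos_step_le hlam0 hlam1 (mod_cast hs) hX (ih (by omega)) (hv s hs hst')
      (hbad s hs hst')

end P2Pegasos

theorem p2pegasos_final_upper_bound {E : Type*} [NormedAddCommGroup E] [InnerProductSpace ℝ E]
    (lam : ℝ) (hlam0 : 0 < lam) (hlam1 : lam < 1)
    (t : ℕ)
    (x : ℕ → E) (y : ℕ → ℝ) (hy : ∀ s, y s = 1 ∨ y s = -1)
    (X : ℝ) (hX : 0 ≤ X) (hxbound : ∀ s, 1 ≤ s → s ≤ t → ‖x s‖^2 ≤ X)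
    (w : ℕ → E) (hw1 : w 1 = 0)
    (hupdate : ∀ s : ℕ, 1 ≤ s → s ≤ t →
      w (s + 1) = (1 - 1/(s : ℝ)) • w s + (1/(lam * s)) • (y s • x s))
    (hbad : ∀ s : ℕ, 1 ≤ s → s ≤ t → y s * ⟪w s, x s⟫ < 1)
    (hXlog : X ≤ Real.logb 2 t) (hlog : 1 ≤ Real.logb 2 t) :
    ‖w (t + 1)‖^2 ≤ 6 * Real.logb 2 t / lam^2 := by
  have hlabel (s : ℕ) : ‖y s • x s‖ = ‖x s‖ := by
    rcases hy s with h | h <;> simp [h]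
  have hball := norm_sq_pegasos_le hlam0 hlam1.le hX hw1 hupdate
    (fun s hs hst => hlabel s ▸ hxbound s hs hst)
    (fun s hs hst => by rw [real_inner_smul_right]; exact hbad s hs hst) (t + 1) (by omega) le_rfl
  refine hball.trans (div_le_div_of_nonneg_right ?_ (sq_nonneg lam))
  linarith
end

section
/- Let E be a real inner product space, let λ > 0 be a real number, let t ≥ 1 be a natural number, let a, b, x_t ∈ E, let y_t ∈ ℝ with y_t = 1 or y_t = −1, and let M ≥ 0 be a real number with ‖a‖ ≤ M and ‖b‖ ≤ M. Assume y_t·⟪a, x_t⟫ < 1 and y_t·⟪b, x_t⟫ < 1. Define w_{t+1} = (1 − 1/t)·((a + b)/2) + (1/(λt))·(y_t·x_t). Then ‖w_{t+1}‖² ≤ M² + 2/(λt) + ‖x_t‖²/(λ²t²). -/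
open RealInnerProductSpace

theorem p2pegasosavg_upper_step {E : Type*} [NormedAddCommGroup E] [InnerProductSpace ℝ E]
    (lam : ℝ) (hlam : 0 < lam) (t : ℕ) (ht : 1 ≤ t)
    (a b xt : E) (yt : ℝ) (hy : yt = 1 ∨ yt = -1)
    (M : ℝ) (hM : 0 ≤ M) (ha : ‖a‖ ≤ M) (hb : ‖b‖ ≤ M)
    (hbada : yt * ⟪a, xt⟫ < 1) (hbadb : yt * ⟪b, xt⟫ < 1) :
    ‖(1 - 1/(t : ℝ)) • (((1 : ℝ)/2) • (a + b)) + (1/(lam * t)) • (yt • xt)‖^2 ≤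
      M^2 + 2/(lam * t) + ‖xt‖^2/(lam^2 * t^2) := by
  have ht0 : (0:ℝ) < (t:ℝ) := by exact_mod_cast Nat.lt_of_lt_of_le Nat.zero_lt_one ht
  have ht1 : (1:ℝ) ≤ (t:ℝ) := by exact_mod_cast ht
  have hs0 : (0:ℝ) ≤ 1 - 1/(t:ℝ) := by
    have : 1/(t:ℝ) ≤ 1 := by rw [div_le_one ht0]; exact ht1
    linarith
  have hs1 : (1:ℝ) - 1/(t:ℝ) ≤ 1 := by
    have : 0 < 1/(t:ℝ) := by positivity
    linarith
  have hk : (0:ℝ) < 1/(lam * t) := by positivity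
  have hy2 : |yt| = 1 := by rcases hy with h | h <;> simp [h]
  set c := (1 - 1/(t : ℝ)) • (((1 : ℝ)/2) • (a + b)) with hc
  set d := (1/(lam * t)) • (yt • xt) with hd
  have hnc : ‖c‖ ≤ M := by
    rw [hc, norm_smul, norm_smul]
    have hab : ‖a + b‖ ≤ 2 * M := by
      calc ‖a + b‖ ≤ ‖a‖ + ‖b‖ := norm_add_le _ _
        _ ≤ 2 * M := by linarith
    have h1 : |1 - 1/(t:ℝ)| = 1 - 1/(t:ℝ) := abs_of_nonneg hs0
    have h2 : ‖(1:ℝ)/2‖ = 1/2 := by norm_num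
    rw [Real.norm_eq_abs, h1, h2]
    calc (1 - 1/(t:ℝ)) * (1/2 * ‖a + b‖) ≤ 1 * (1/2 * (2*M)) := by
          apply mul_le_mul hs1 _ (by positivity) (by norm_num)
          apply mul_le_mul_of_nonneg_left hab (by norm_num)
      _ = M := by ring
  have hnd : ‖d‖^2 = ‖xt‖^2/(lam^2 * t^2) := by
    have hdn : ‖d‖ = (1/(lam*t)) * ‖xt‖ := by
      rw [hd, norm_smul, norm_smul, Real.norm_eq_abs, Real.norm_eq_abs, hy2,
        abs_of_pos hk]
      ring
    rw [hdn]
    ring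
  have hA : ⟪c, d⟫ = (1 - 1/(t:ℝ)) * (1/2) * (1/(lam*t)) * (yt*⟪a,xt⟫ + yt*⟪b,xt⟫) := by
    simp [hc, hd, inner_add_left, real_inner_smul_left, real_inner_smul_right]
    ring
  have hinner : ⟪c, d⟫ ≤ 1/(lam * t) := by
    rw [hA]
    nlinarith [mul_nonneg (mul_nonneg hs0 hk.le)
        (by linarith : (0:ℝ) ≤ 2 - (yt*⟪a,xt⟫ + yt*⟪b,xt⟫)),
      mul_nonneg (by linarith : (0:ℝ) ≤ 1 - (1 - 1/(t:ℝ))) hk.le]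
  have hexp := norm_add_sq_real c d
  have hc2 : ‖c‖^2 ≤ M^2 := pow_le_pow_left₀ (norm_nonneg c) hnc 2
  have h2k : 2/(lam*t) = 2*(1/(lam*t)) := by ring
  linarith [hexp, hnd, hinner, hc2]
end

section
/- Let E be a real inner product space, let ι be a nonempty finite index type, let λ be a real number with 0 < λ < 1, let t be a natural number, let x : ℕ → E and y : ℕ → ℝ with y(s) = 1 or y(s) = −1 for all s, and let X ≥ 0 with ‖x(s)‖² ≤ X for all 1 ≤ s ≤ t. Let w : ℕ → ι → E be a family of models such that w(1)(p) = 0 for every p ∈ ι, and such that for every 1 ≤ s ≤ t and every p ∈ ι there exist i, j ∈ ι with w(s+1)(p) = (1 − 1/s)·((w(s)(i) + w(s)(j))/2) + (1/(λs))·(y(s)·x(s)). Assume every sample is badly classified by every model of its age: y(s)·⟪w(s)(q), x(s)⟫ < 1 for all 1 ≤ s ≤ t and all q ∈ ι. If X ≤ logb 2 t and 1 ≤ logb 2 t (equivalently, max(2^X, 2) ≤ t), then ‖w(t+1)(p)‖² ≤ 6·(logb 2 t)/λ² for every p ∈ ι, where logb 2 denotes the base-2 logarithm. -/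
open RealInnerProductSpace

theorem p2pegasosavg_upper_bound {E : Type*} [NormedAddCommGroup E] [InnerProductSpace ℝ E]
    {ι : Type*} [Fintype ι] [Nonempty ι]
    (lam : ℝ) (hlam0 : 0 < lam) (hlam1 : lam < 1)
    (t : ℕ)
    (x : ℕ → E) (y : ℕ → ℝ) (hy : ∀ s, y s = 1 ∨ y s = -1)
    (X : ℝ) (hX : 0 ≤ X) (hxbound : ∀ s, 1 ≤ s → s ≤ t → ‖x s‖^2 ≤ X)
    (w : ℕ → ι → E) (hw1 : ∀ p : ι, w 1 p = 0)
    (hupdate : ∀ s : ℕ, 1 ≤ s → s ≤ t → ∀ p : ι, ∃ i j : ι,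
      w (s + 1) p = (1 - 1/(s : ℝ)) • (((1 : ℝ)/2) • (w s i + w s j)) + (1/(lam * s)) • (y s • x s))
    (hbad : ∀ s : ℕ, 1 ≤ s → s ≤ t → ∀ q : ι, y s * ⟪w s q, x s⟫ < 1)
    (hXlog : X ≤ Real.logb 2 t) (hlog : 1 ≤ Real.logb 2 t) :
    ∀ p : ι, ‖w (t + 1) p‖^2 ≤ 6 * Real.logb 2 t / lam^2 := by
  have hsX : (0:ℝ) ≤ Real.sqrt X := Real.sqrt_nonneg X
  have key : ∀ s : ℕ, 1 ≤ s → s ≤ t + 1 → ∀ p : ι, ‖w s p‖ ≤ Real.sqrt X / lam := by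
    intro s
    induction s with
    | zero => intro h; omega
    | succ n ih =>
      intro _ hle p
      rcases Nat.eq_zero_or_pos n with hn0 | hn1
      · subst hn0
        rw [hw1 p, norm_zero]
        positivity
      · have hnt : n ≤ t := by omega
        obtain ⟨i, j, hupd⟩ := hupdate n hn1 hnt p
        have hcn : (1:ℝ) ≤ (n:ℝ) := by exact_mod_cast hn1
        have hcn0 : (0:ℝ) < (n:ℝ) := by linarith
        have hwi := ih hn1 (by omega) i
        have hwj := ih hn1 (by omega) j
        have hx : ‖x n‖ ≤ Real.sqrt X := by
          have := hxbound n hn1 hnt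
          nlinarith [Real.sq_sqrt hX, norm_nonneg (x n)]
        have hyx : ‖y n • x n‖ = ‖x n‖ := by
          rcases hy n with h | h <;> rw [norm_smul, h] <;> simp
        rw [hupd]
        calc ‖(1 - 1/(n:ℝ)) • (((1:ℝ)/2) • (w n i + w n j)) + (1/(lam * n)) • (y n • x n)‖
            ≤ ‖(1 - 1/(n:ℝ)) • (((1:ℝ)/2) • (w n i + w n j))‖ + ‖(1/(lam * n)) • (y n • x n)‖ :=
              norm_add_le _ _
          _ = |1 - 1/(n:ℝ)| * (|((1:ℝ)/2)| * ‖w n i + w n j‖) + |1/(lam * n)| * ‖x n‖ := by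
              rw [norm_smul, norm_smul, norm_smul, hyx, Real.norm_eq_abs, Real.norm_eq_abs, Real.norm_eq_abs]
          _ ≤ (1 - 1/(n:ℝ)) * (((1:ℝ)/2) * (‖w n i‖ + ‖w n j‖)) + (1/(lam * n)) * Real.sqrt X := by
              have h1 : |1 - 1/(n:ℝ)| = 1 - 1/(n:ℝ) := by
                rw [abs_of_nonneg]
                have : 1/(n:ℝ) ≤ 1 := by
                  rw [div_le_one hcn0]; exact hcn
                linarith
              have h2 : |((1:ℝ)/2)| = (1:ℝ)/2 := by norm_num
              have h3 : |1/(lam * (n:ℝ))| = 1/(lam * n) := by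
                rw [abs_of_nonneg]; positivity
              rw [h1, h2, h3]
              have hfac : 0 ≤ 1 - 1/(n:ℝ) := by
                have : 1/(n:ℝ) ≤ 1 := by rw [div_le_one hcn0]; exact hcn
                linarith
              have hpos : (0:ℝ) < 1/(lam * n) := by positivity
              gcongr
              exact norm_add_le _ _
          _ ≤ (1 - 1/(n:ℝ)) * (Real.sqrt X / lam) + (1/(lam * n)) * Real.sqrt X := by
              have hfac : 0 ≤ 1 - 1/(n:ℝ) := by
                have : 1/(n:ℝ) ≤ 1 := by rw [div_le_one hcn0]; exact hcn
                linarith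
              gcongr
              linarith
          _ = Real.sqrt X / lam := by
              field_simp
              ring
  have hfinal := key (t + 1) (by omega) le_rfl
  intro p
  have h1 : ‖w (t + 1) p‖ ^ 2 ≤ (Real.sqrt X / lam) ^ 2 := by
    have := hfinal p
    have h0 : (0:ℝ) ≤ Real.sqrt X / lam := by positivity
    nlinarith [norm_nonneg (w (t+1) p)]
  have h2 : (Real.sqrt X / lam) ^ 2 = X / lam ^ 2 := by
    rw [div_pow, Real.sq_sqrt hX]
  have h3 : X / lam ^ 2 ≤ 6 * Real.logb 2 t / lam ^ 2 := by
    gcongr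
    linarith
  linarith
end
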